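/- Let C be a binary linear code of length n, let k ∈ ℕ, and let q ∈ ℂ be nonzero. Then Σ_{a ∈ C} Σ_{b ∈ 𝔽₂^k} q^{|c_{a,b}|} = Σ_{a ∈ C} q^{k·|a|} · (1 + q^{n − 2|a|})^k, where q^{n − 2|a|} denotes the integer power of the nonzero complex number q with exponent n − 2|a| ∈ ℤ. -/

import Mathlib

/-!
Splitting the coordinates of `c_{a,b}` into the `k` columns `l₂ = j`, the weight of `c_{a,b}` is
`∑ j, |a + b_j|`, and `|a + b_j|` is `|a|` or `n - |a|` according as `b_j = 0` or `1`. Hence the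
inner sum over `b ∈ 𝔽₂^k` factors as `(q^{|a|} + q^{n-|a|})^k = q^{k|a|} (1 + q^{n-2|a|})^k`.
-/

open Finset

section HammingNorm

variable {ι κ : Type*} [Fintype ι] [Fintype κ]

theorem hammingNorm_prod_eq_sum {β : Type*} [Zero β] [DecidableEq β] (f : ι × κ → β) :
    hammingNorm f = ∑ j, hammingNorm fun i => f (i, j) := by
  simp only [hammingNorm, card_filter, Fintype.sum_prod_type]
  exact sum_comm

theorem hammingNorm_add_one (a : ι → ZMod 2) :
    hammingNorm (fun i => a i + 1) = Fintype.card ι - hammingNorm a := by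
  classical
  have hflip : ∀ x : ZMod 2, x + 1 ≠ 0 ↔ x = 0 := by decide
  have hsupp : ({i | a i + 1 ≠ 0} : Finset ι) = ({i | a i ≠ 0} : Finset ι)ᶜ := by
    ext i
    simp [hflip]
  rw [hammingNorm, hsupp, card_compl, hammingNorm]

theorem sum_pow_hammingNorm_add_const {R : Type*} [CommSemiring R] (q : R) (a : ι → ZMod 2) :
    ∑ x : ZMod 2, q ^ hammingNorm (fun i => a i + x) =
      q ^ hammingNorm a + q ^ (Fintype.card ι - hammingNorm a) := by
  rw [show (univ : Finset (ZMod 2)) = {0, 1} by decide, sum_pair zero_ne_one, ← hammingNorm_add_one]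
  simp only [add_zero]

theorem sum_pow_hammingNorm_wreath {R : Type*} [CommSemiring R] [DecidableEq κ] (q : R)
    (a : ι → ZMod 2) :
    ∑ b : κ → ZMod 2, q ^ hammingNorm (fun p : ι × κ => a p.1 + b p.2) =
      (q ^ hammingNorm a + q ^ (Fintype.card ι - hammingNorm a)) ^ Fintype.card κ := by
  calc ∑ b : κ → ZMod 2, q ^ hammingNorm (fun p : ι × κ => a p.1 + b p.2)
      = ∑ b : κ → ZMod 2, ∏ j, q ^ hammingNorm (fun i => a i + b j) := by
        simp only [hammingNorm_prod_eq_sum, prod_pow_eq_pow_sum]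
    _ = ∏ _j : κ, ∑ x : ZMod 2, q ^ hammingNorm (fun i => a i + x) :=
        (Fintype.prod_sum fun _ x => q ^ hammingNorm (fun i => a i + x)).symm
    _ = _ := by rw [sum_pow_hammingNorm_add_const, prod_const, card_univ]

end HammingNorm

theorem pow_add_pow_sub_eq_mul_one_add_zpow {K : Type*} [DivisionRing K] {q : K} (hq : q ≠ 0)
    {w n : ℕ} (hw : w ≤ n) :
    q ^ w + q ^ (n - w) = q ^ w * (1 + q ^ ((n : ℤ) - 2 * (w : ℤ))) := by
  rw [mul_add, mul_one, ← zpow_natCast q w, ← zpow_add₀ hq, ← zpow_natCast q (n - w)]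
  congr 2
  omega

/-- The wreath sum of a binary linear code `C` with the trivial code `𝔽₂^k`:
`Σ_{a∈C} Σ_{b∈𝔽₂^k} q^{|c_{a,b}|} = Σ_{a∈C} q^{k|a|} (1 + q^{n-2|a|})^k` for nonzero `q`. -/
theorem weightEnumerator_wreathSum_trivial (n k : ℕ)
    (C : Submodule (ZMod 2) (Fin n → ZMod 2)) (q : ℂ) (hq : q ≠ 0) :
    (∑ᶠ a ∈ (C : Set (Fin n → ZMod 2)), ∑ b : Fin k → ZMod 2,
        q ^ hammingNorm (fun p : Fin n × Fin k => a p.1 + b p.2))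
      = ∑ᶠ a ∈ (C : Set (Fin n → ZMod 2)),
          q ^ (k * hammingNorm a) *
            (1 + q ^ ((n : ℤ) - 2 * (hammingNorm a : ℤ))) ^ k := by
  refine finsum_mem_congr rfl fun a _ => ?_
  have hw : hammingNorm a ≤ n := by simpa using hammingNorm_le_card_fintype (x := a)
  rw [sum_pow_hammingNorm_wreath, Fintype.card_fin, Fintype.card_fin,
    pow_add_pow_sub_eq_mul_one_add_zpow hq hw, mul_pow, ← pow_mul, Nat.mul_comm]
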